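/- arXiv:1112.1050 — 6 statements merged into one kernel-verified Lean document; each statement's English description precedes it below -/
import Mathlib

section
/- Let V be a finite-dimensional real vector space with a Lorentzian (signature (n-1,1)) nondegenerate symmetric bilinear form g, and let F : V^4 → ℝ be a curvature-like map (i.e., F satisfies the symmetries of a Riemann curvature tensor: F(x,y,z,w)=F(z,w,x,y), F is antisymmetric in the first two and last two arguments, and satisfies the first Bianchi identity). Then F(x,y,z,w) = k(g(x,z)g(y,w) − g(y,z)g(x,w)) for some constant k ∈ ℝ and all x,y,z,w ∈ V if and only if F(x,y,x,y) = 0 for every pair of vectors x,y spanning a degenerate 2-plane (i.e., such that g(x,x)g(y,y) − g(x,y)² = 0 with x,y linearly independent). -/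
/-- A symmetric bilinear form on a real vector space is *Lorentzian* if it admits an
orthonormal basis with exactly one timelike (norm `-1`) vector and all the others
spacelike (norm `+1`). -/
def IsLorentzian {V : Type*} [AddCommGroup V] [Module ℝ V]
    (g : V →ₗ[ℝ] V →ₗ[ℝ] ℝ) : Prop :=
  ∃ (n : ℕ) (b : Module.Basis (Fin (n + 1)) ℝ V), ∀ i j,
    g (b i) (b j) = if i = j then (if i = 0 then (-1 : ℝ) else 1) else 0

/-- A (multilinear) map `F : V⁴ → ℝ` is *curvature-like* if it satisfies the algebraic
symmetries of the Riemann curvature tensor. -/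
def IsCurvatureLike {V : Type*} [AddCommGroup V] [Module ℝ V]
    (F : V →ₗ[ℝ] V →ₗ[ℝ] V →ₗ[ℝ] V →ₗ[ℝ] ℝ) : Prop :=
  (∀ x y z w, F x y z w = F z w x y) ∧
  (∀ x y z w, F x y z w = - F y x z w) ∧
  (∀ x y z w, F x y z w = - F x y w z) ∧
  (∀ x y z w, F x y z w + F y z x w + F z x y w = 0)


/-!
Adding a suitable multiple of the model tensor `g(x,z)g(y,w) − g(y,z)g(x,w)`, which itself
vanishes on degenerate planes, reduces the theorem to: a curvature-like `D` vanishing on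
degenerate planes with `D(e₀,e₁,e₀,e₁) = 0` is zero, for a Lorentz-orthonormal basis `e`.
If `t` is unit timelike and `s` unit spacelike with `t ⊥ s`, then `t ± s` are null, which gives
`D(t,y,t,z) + D(s,y,s,z) = 0` and `D(t,y,s,z) + D(s,y,t,z) = 0` for `y, z ⊥ t, s`.
Taking `t = e₀` and `s = e_p` or `s = (3 e_p + 4 e_q) / 5` kills every component
`D(e_i,e_j,e_i,e_l)` and every symmetrization `D(e_i,e_j,e_k,e_l) + D(e_k,e_j,e_i,e_l)` with
distinct indices, and the Bianchi identity then kills all components.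
-/

section

variable {V : Type*} [AddCommGroup V] [Module ℝ V]

def constCurvatureTensor (g : V →ₗ[ℝ] V →ₗ[ℝ] ℝ) : V →ₗ[ℝ] V →ₗ[ℝ] V →ₗ[ℝ] V →ₗ[ℝ] ℝ :=
  LinearMap.mk₂ ℝ
    (fun x y => (LinearMap.mul ℝ ℝ).compl₁₂ (g x) (g y) - (LinearMap.mul ℝ ℝ).compl₁₂ (g y) (g x))
    (by intros; ext; simp; ring) (by intros; ext; simp; ring)
    (by intros; ext; simp; ring) (by intros; ext; simp; ring)

@[simp]
theorem constCurvatureTensor_apply (g : V →ₗ[ℝ] V →ₗ[ℝ] ℝ) (x y z w : V) :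
    constCurvatureTensor g x y z w = g x z * g y w - g y z * g x w :=
  rfl

theorem isCurvatureLike_constCurvatureTensor {g : V →ₗ[ℝ] V →ₗ[ℝ] ℝ}
    (hg : ∀ x y, g x y = g y x) : IsCurvatureLike (constCurvatureTensor g) := by
  refine ⟨fun x y z w => ?_, fun x y z w => ?_, fun x y z w => ?_, fun x y z w => ?_⟩ <;>
    simp only [constCurvatureTensor_apply, hg w y, hg w x, hg z y, hg y x, hg z x] <;> ring

namespace IsCurvatureLike

variable {F G : V →ₗ[ℝ] V →ₗ[ℝ] V →ₗ[ℝ] V →ₗ[ℝ] ℝ}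

theorem add (hF : IsCurvatureLike F) (hG : IsCurvatureLike G) : IsCurvatureLike (F + G) := by
  obtain ⟨hF₁, hF₂, hF₃, hF₄⟩ := hF
  obtain ⟨hG₁, hG₂, hG₃, hG₄⟩ := hG
  refine ⟨fun x y z w => ?_, fun x y z w => ?_, fun x y z w => ?_, fun x y z w => ?_⟩ <;>
    simp only [LinearMap.add_apply]
  · rw [hF₁, hG₁]
  · rw [hF₂, hG₂, neg_add]
  · rw [hF₃, hG₃, neg_add]
  · linear_combination hF₄ x y z w + hG₄ x y z w

theorem smul (hF : IsCurvatureLike F) (k : ℝ) : IsCurvatureLike (k • F) := by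
  obtain ⟨hF₁, hF₂, hF₃, hF₄⟩ := hF
  refine ⟨fun x y z w => ?_, fun x y z w => ?_, fun x y z w => ?_, fun x y z w => ?_⟩ <;>
    simp only [LinearMap.smul_apply, smul_eq_mul]
  · rw [hF₁]
  · rw [hF₂, mul_neg]
  · rw [hF₃, mul_neg]
  · linear_combination k * hF₄ x y z w

theorem apply_self_left (hF : IsCurvatureLike F) (x z w : V) : F x x z w = 0 := by
  linarith [hF.2.1 x x z w]

theorem apply_self_right (hF : IsCurvatureLike F) (x y z : V) : F x y z z = 0 := by
  linarith [hF.2.2.1 x y z z]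

theorem apply_swap_swap (hF : IsCurvatureLike F) (x y z w : V) : F y x w z = F x y z w := by
  rw [hF.2.1, hF.2.2.1, neg_neg]

theorem cyclic_last_three (hF : IsCurvatureLike F) (w x y z : V) :
    F w x y z + F w y z x + F w z x y = 0 := by
  obtain ⟨hF₁, -, hF₃, hF₄⟩ := hF
  rw [hF₁ w x, hF₁ w y, hF₁ w z, hF₃ y z, hF₃ z x, hF₃ x y]
  linear_combination -hF₄ y z x w

/-- The first Bianchi identity turns the two symmetrizations into `3 F(x,y,z,w) = 0`. -/
theorem eq_zero_of_add_swap (hF : IsCurvatureLike F) {x y z w : V}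
    (h₁ : F x y z w + F z y x w = 0) (h₂ : F y z x w + F x z y w = 0) : F x y z w = 0 := by
  have := hF.2.1 z y x w
  have := hF.2.1 x z y w
  linarith [hF.2.2.2 x y z w]

theorem apply_eq_zero_of_not_linearIndependent (hF : IsCurvatureLike F) {x y : V}
    (h : ¬LinearIndependent ℝ ![x, y]) : F x y x y = 0 := by
  by_contra hne
  refine h (LinearIndependent.pair_iff.mpr fun s t hst => ?_)
  have hs : s * F x y x y = 0 := by
    have : F (s • x + t • y) y x y = 0 := by rw [hst]; simp
    simpa [hF.apply_self_left] using this
  have ht : t * F x y x y = 0 := by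
    have : F x (s • x + t • y) x y = 0 := by rw [hst]; simp
    simpa [hF.apply_self_left] using this
  exact ⟨(mul_eq_zero.mp hs).resolve_right hne, (mul_eq_zero.mp ht).resolve_right hne⟩

end IsCurvatureLike

/-- Polarized form of vanishing on degenerate planes: a degenerate plane is spanned by a null
vector `u` and a vector orthogonal to `u`. -/
def VanishesOnNullPlanes (g : V →ₗ[ℝ] V →ₗ[ℝ] ℝ)
    (F : V →ₗ[ℝ] V →ₗ[ℝ] V →ₗ[ℝ] V →ₗ[ℝ] ℝ) : Prop :=
  ∀ u y z, g u u = 0 → g u y = 0 → g u z = 0 → F u y u z = 0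

def IsLorentzOrthonormal (g : V →ₗ[ℝ] V →ₗ[ℝ] ℝ) {n : ℕ} (b : Module.Basis (Fin (n + 1)) ℝ V) :
    Prop :=
  ∀ i j, g (b i) (b j) = if i = j then (if i = 0 then (-1 : ℝ) else 1) else 0

variable {g : V →ₗ[ℝ] V →ₗ[ℝ] ℝ} {F D : V →ₗ[ℝ] V →ₗ[ℝ] V →ₗ[ℝ] V →ₗ[ℝ] ℝ}

theorem IsCurvatureLike.vanishesOnNullPlanes (hF : IsCurvatureLike F)
    (hvan : ∀ x y : V, LinearIndependent ℝ ![x, y] →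
      g x x * g y y - (g x y) ^ 2 = 0 → F x y x y = 0) :
    VanishesOnNullPlanes g F := by
  have hdiag : ∀ u y, g u u = 0 → g u y = 0 → F u y u y = 0 := fun u y hu hy => by
    by_cases hind : LinearIndependent ℝ ![u, y]
    · exact hvan u y hind (by rw [hu, hy]; ring)
    · exact hF.apply_eq_zero_of_not_linearIndependent hind
  intro u y z hu hy hz
  have h := hdiag u (y + z) hu (by rw [map_add, hy, hz, add_zero])
  simp only [map_add, LinearMap.add_apply, hdiag u y hu hy, hdiag u z hu hz, hF.1 u z u y] at h
  linarith

namespace VanishesOnNullPlanes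

theorem add_smul_constCurvatureTensor (hF : VanishesOnNullPlanes g F) (k : ℝ) :
    VanishesOnNullPlanes g (F + k • constCurvatureTensor g) := fun u y z hu hy hz => by
  simp [hF u y z hu hy hz, hu, hz]

theorem boost (hD : VanishesOnNullPlanes g D) {t s y z : V}
    (hadd : g (t + s) (t + s) = 0) (hsub : g (t - s) (t - s) = 0)
    (hty : g t y = 0) (hsy : g s y = 0) (htz : g t z = 0) (hsz : g s z = 0) :
    D t y t z + D s y s z = 0 ∧ D t y s z + D s y t z = 0 := by
  have hp := hD (t + s) y z hadd (by simp [hty, hsy]) (by simp [htz, hsz])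
  have hm := hD (t - s) y z hsub (by simp [hty, hsy]) (by simp [htz, hsz])
  rw [sub_eq_add_neg, ← neg_one_smul ℝ s] at hm
  simp only [map_add, map_smul, LinearMap.add_apply, LinearMap.smul_apply, smul_eq_mul] at hp hm
  constructor <;> linarith

variable {n : ℕ} {b : Module.Basis (Fin (n + 1)) ℝ V}

theorem basis_boost (hD : VanishesOnNullPlanes g D) (hb : IsLorentzOrthonormal g b)
    {p j l : Fin (n + 1)} (hp : p ≠ 0) (hj : j ≠ 0) (hjp : j ≠ p) (hl : l ≠ 0) (hlp : l ≠ p) :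
    D (b p) (b j) (b p) (b l) = -D (b 0) (b j) (b 0) (b l) ∧
      D (b 0) (b j) (b p) (b l) + D (b p) (b j) (b 0) (b l) = 0 := by
  obtain ⟨h₁, h₂⟩ := hD.boost (t := b 0) (s := b p) (y := b j) (z := b l)
    (by simp [hb _ _, hp, hp.symm]) (by simp [hb _ _, hp, hp.symm])
    (by simp [hb _ _, hj.symm]) (by simp [hb _ _, hjp.symm])
    (by simp [hb _ _, hl.symm]) (by simp [hb _ _, hlp.symm])
  exact ⟨by linarith, h₂⟩

/-- `3² + 4² = 5²` makes `5 e₀ ± (3 e_p + 4 e_q)` null. -/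
theorem basis_rotated_boost (hD : VanishesOnNullPlanes g D) (hb : IsLorentzOrthonormal g b)
    {p q : Fin (n + 1)} (hp : p ≠ 0) (hq : q ≠ 0) (hpq : p ≠ q) {y z : V}
    (hy : g (b 0) y = 0) (hy' : g ((3 : ℝ) • b p + (4 : ℝ) • b q) y = 0)
    (hz : g (b 0) z = 0) (hz' : g ((3 : ℝ) • b p + (4 : ℝ) • b q) z = 0) :
    25 * D (b 0) y (b 0) z +
      D ((3 : ℝ) • b p + (4 : ℝ) • b q) y ((3 : ℝ) • b p + (4 : ℝ) • b q) z = 0 := by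
  have h := (hD.boost (t := (5 : ℝ) • b 0) (s := (3 : ℝ) • b p + (4 : ℝ) • b q)
    (by simp [hb _ _, hp, hq, hpq, hp.symm, hq.symm, hpq.symm]; norm_num)
    (by simp [hb _ _, hp, hq, hpq, hp.symm, hq.symm, hpq.symm]; norm_num)
    (by simp [hy]) hy' (by simp [hz]) hz').1
  simp only [map_smul, LinearMap.smul_apply, smul_eq_mul] at h
  linarith

theorem timelike_sectional_eq_zero (hD : VanishesOnNullPlanes g D)
    (hb : IsLorentzOrthonormal g b) (hDc : IsCurvatureLike D)
    (h01 : D (b 0) (b 1) (b 0) (b 1) = 0) {p : Fin (n + 1)} (hp : p ≠ 0) :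
    D (b 0) (b p) (b 0) (b p) = 0 := by
  rcases eq_or_ne p 1 with rfl | hp1
  · exact h01
  have h1 : (1 : Fin (n + 1)) ≠ 0 := fun h =>
    hp (Fin.ext (by have := Fin.one_eq_zero_iff.mp h; have := p.isLt; simp; omega))
  have e₁ := (hD.basis_boost hb hp h1 hp1.symm h1 hp1.symm).1
  have e₂ := (hD.basis_boost hb h1 hp hp1 hp hp1).1
  linarith [hDc.apply_swap_swap (b p) (b 1) (b p) (b 1)]

theorem timelike_jacobi_eq_zero (hD : VanishesOnNullPlanes g D)
    (hb : IsLorentzOrthonormal g b) (hDc : IsCurvatureLike D)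
    (h01 : D (b 0) (b 1) (b 0) (b 1) = 0) (j l : Fin (n + 1)) :
    D (b 0) (b j) (b 0) (b l) = 0 := by
  rcases eq_or_ne j 0 with rfl | hj
  · exact hDc.apply_self_left _ _ _
  rcases eq_or_ne l 0 with rfl | hl
  · exact hDc.apply_self_right _ _ _
  rcases eq_or_ne j l with rfl | hjl
  · exact hD.timelike_sectional_eq_zero hb hDc h01 hj
  have h := hD.basis_rotated_boost hb hj hl hjl (y := (4 : ℝ) • b j - (3 : ℝ) • b l)
    (z := (4 : ℝ) • b j - (3 : ℝ) • b l)
    (by simp [hb _ _, hj.symm, hl.symm]) (by simp [hb _ _, hj, hl, hjl, hjl.symm]; norm_num)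
    (by simp [hb _ _, hj.symm, hl.symm]) (by simp [hb _ _, hj, hl, hjl, hjl.symm]; norm_num)
  simp only [map_add, map_sub, map_smul, LinearMap.add_apply, LinearMap.sub_apply,
    LinearMap.smul_apply, smul_eq_mul, hDc.apply_self_left, hDc.apply_self_right] at h
  have hjj := hD.timelike_sectional_eq_zero hb hDc h01 hj
  have hll := hD.timelike_sectional_eq_zero hb hDc h01 hl
  have hjl' := (hD.basis_boost hb hj hl hjl.symm hl hjl.symm).1
  linarith [hDc.1 (b 0) (b l) (b 0) (b j), hDc.apply_swap_swap (b j) (b l) (b j) (b l),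
    hDc.2.1 (b l) (b j) (b j) (b l), hDc.2.2.1 (b j) (b l) (b j) (b l)]

theorem timelike_mixed_eq_zero (hD : VanishesOnNullPlanes g D)
    (hb : IsLorentzOrthonormal g b) (hDc : IsCurvatureLike D) {p q r : Fin (n + 1)}
    (hp : p ≠ 0) (hq : q ≠ 0) (hr : r ≠ 0) (hpq : p ≠ q) (hpr : p ≠ r) (hqr : q ≠ r) :
    D (b 0) (b p) (b q) (b r) = 0 := by
  have e₁ := (hD.basis_boost hb hp hq hpq.symm hr hpr.symm).2
  have e₂ := (hD.basis_boost hb hq hp hpq hr hqr.symm).2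
  linarith [hDc.cyclic_last_three (b 0) (b p) (b q) (b r), hDc.1 (b p) (b q) (b 0) (b r),
    hDc.1 (b q) (b p) (b 0) (b r), hDc.2.2.1 (b 0) (b r) (b q) (b p),
    hDc.2.2.1 (b 0) (b q) (b p) (b r)]

theorem spatial_swap_sum_eq_zero (hD : VanishesOnNullPlanes g D)
    (hb : IsLorentzOrthonormal g b) (hDc : IsCurvatureLike D)
    (h01 : D (b 0) (b 1) (b 0) (b 1) = 0) {p q j l : Fin (n + 1)}
    (hp : p ≠ 0) (hq : q ≠ 0) (hj : j ≠ 0) (hl : l ≠ 0)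
    (hpq : p ≠ q) (hjp : j ≠ p) (hjq : j ≠ q) (hlp : l ≠ p) (hlq : l ≠ q) :
    D (b p) (b j) (b q) (b l) + D (b q) (b j) (b p) (b l) = 0 := by
  have h := hD.basis_rotated_boost hb hp hq hpq (y := b j) (z := b l)
    (by simp [hb _ _, hj.symm]) (by simp [hb _ _, hjp.symm, hjq.symm])
    (by simp [hb _ _, hl.symm]) (by simp [hb _ _, hlp.symm, hlq.symm])
  simp only [map_add, map_smul, LinearMap.add_apply, LinearMap.smul_apply, smul_eq_mul] at h
  have h0 := hD.timelike_jacobi_eq_zero hb hDc h01 j l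
  have hp' := (hD.basis_boost hb hp hj hjp hl hlp).1
  have hq' := (hD.basis_boost hb hq hj hjq hl hlq).1
  linarith

theorem jacobi_eq_zero (hD : VanishesOnNullPlanes g D)
    (hb : IsLorentzOrthonormal g b) (hDc : IsCurvatureLike D)
    (h01 : D (b 0) (b 1) (b 0) (b 1) = 0) (i j l : Fin (n + 1)) :
    D (b i) (b j) (b i) (b l) = 0 := by
  rcases eq_or_ne i 0 with rfl | hi
  · exact hD.timelike_jacobi_eq_zero hb hDc h01 j l
  have htime : ∀ l, D (b i) (b 0) (b i) (b l) = 0 := fun l => by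
    rcases eq_or_ne l 0 with rfl | hl
    · rw [hDc.apply_swap_swap]; exact hD.timelike_jacobi_eq_zero hb hDc h01 i i
    rcases eq_or_ne l i with rfl | hli
    · exact hDc.apply_self_right _ _ _
    have h := (hD.basis_boost hb hl hi hli.symm hi hli.symm).2
    linarith [hDc.apply_swap_swap (b 0) (b i) (b l) (b i), hDc.1 (b l) (b i) (b 0) (b i)]
  rcases eq_or_ne j 0 with rfl | hj
  · exact htime l
  rcases eq_or_ne l 0 with rfl | hl
  · rw [hDc.1]; exact htime j
  rcases eq_or_ne j i with rfl | hji
  · exact hDc.apply_self_left _ _ _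
  rcases eq_or_ne l i with rfl | hli
  · exact hDc.apply_self_right _ _ _
  rw [(hD.basis_boost hb hi hj hji hl hli).1, hD.timelike_jacobi_eq_zero hb hDc h01, neg_zero]

theorem swap_sum_eq_zero (hD : VanishesOnNullPlanes g D)
    (hb : IsLorentzOrthonormal g b) (hDc : IsCurvatureLike D)
    (h01 : D (b 0) (b 1) (b 0) (b 1) = 0) {i j k l : Fin (n + 1)}
    (hij : i ≠ j) (hik : i ≠ k) (hil : i ≠ l) (hjk : j ≠ k) (hjl : j ≠ l) (hkl : k ≠ l) :
    D (b i) (b j) (b k) (b l) + D (b k) (b j) (b i) (b l) = 0 := by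
  rcases eq_or_ne i 0 with rfl | hi
  · exact (hD.basis_boost hb hik.symm hij.symm hjk hil.symm hkl.symm).2
  rcases eq_or_ne k 0 with rfl | hk
  · rw [add_comm]; exact (hD.basis_boost hb hi hjk hij.symm hkl.symm hil.symm).2
  rcases eq_or_ne j 0 with rfl | hj
  · linarith [hDc.2.1 (b i) (b 0) (b k) (b l), hDc.2.1 (b k) (b 0) (b i) (b l),
      hD.timelike_mixed_eq_zero hb hDc hi hk hjl.symm hik hil hkl,
      hD.timelike_mixed_eq_zero hb hDc hk hi hjl.symm hik.symm hkl hil]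
  rcases eq_or_ne l 0 with rfl | hl
  · linarith [hDc.1 (b i) (b j) (b k) (b 0), hDc.1 (b k) (b j) (b i) (b 0),
      hDc.2.1 (b k) (b 0) (b i) (b j), hDc.2.1 (b i) (b 0) (b k) (b j),
      hD.timelike_mixed_eq_zero hb hDc hk hi hj hik.symm hjk.symm hij,
      hD.timelike_mixed_eq_zero hb hDc hi hk hj hik hij hjk.symm]
  exact hD.spatial_swap_sum_eq_zero hb hDc h01 hi hk hj hl hik hij.symm hjk hil.symm hkl.symm

theorem basis_eq_zero (hD : VanishesOnNullPlanes g D)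
    (hb : IsLorentzOrthonormal g b) (hDc : IsCurvatureLike D)
    (h01 : D (b 0) (b 1) (b 0) (b 1) = 0) (i j k l : Fin (n + 1)) :
    D (b i) (b j) (b k) (b l) = 0 := by
  have hJ := hD.jacobi_eq_zero hb hDc h01
  rcases eq_or_ne i j with rfl | hij
  · exact hDc.apply_self_left _ _ _
  rcases eq_or_ne k l with rfl | hkl
  · exact hDc.apply_self_right _ _ _
  rcases eq_or_ne i k with rfl | hik
  · exact hJ i j l
  rcases eq_or_ne i l with rfl | hil
  · rw [hDc.2.2.1, hJ, neg_zero]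
  rcases eq_or_ne j k with rfl | hjk
  · rw [hDc.2.1, hJ, neg_zero]
  rcases eq_or_ne j l with rfl | hjl
  · rw [← hDc.apply_swap_swap, hJ]
  exact hDc.eq_zero_of_add_swap (hD.swap_sum_eq_zero hb hDc h01 hij hik hil hjk hjl hkl)
    (hD.swap_sum_eq_zero hb hDc h01 hjk hij.symm hjl hik.symm hkl hil)

theorem eq_zero (hD : VanishesOnNullPlanes g D) (hb : IsLorentzOrthonormal g b)
    (hDc : IsCurvatureLike D) (h01 : D (b 0) (b 1) (b 0) (b 1) = 0) : D = 0 :=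
  b.ext fun i => b.ext fun j => b.ext fun k => b.ext fun l => by
    simpa using hD.basis_eq_zero hb hDc h01 i j k l

end VanishesOnNullPlanes

end

theorem curvatureLike_const_iff_vanishes_on_degenerate_planes_general
    {V : Type*} [AddCommGroup V] [Module ℝ V]
    (g : V →ₗ[ℝ] V →ₗ[ℝ] ℝ) (hgsymm : ∀ x y, g x y = g y x)
    (hgL : IsLorentzian g)
    (F : V →ₗ[ℝ] V →ₗ[ℝ] V →ₗ[ℝ] V →ₗ[ℝ] ℝ) (hF : IsCurvatureLike F) :
    (∃ k : ℝ, ∀ x y z w : V,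
        F x y z w = k * (g x z * g y w - g y z * g x w)) ↔
    (∀ x y : V, LinearIndependent ℝ ![x, y] →
        g x x * g y y - (g x y) ^ 2 = 0 → F x y x y = 0) := by
  constructor
  · rintro ⟨k, hk⟩ x y - hdeg
    rw [hk, hgsymm y x]
    linear_combination k * hdeg
  · intro hvan
    obtain ⟨n, b, hb⟩ := hgL
    set k := F (b 0) (b 1) (b 0) (b 1) with hk
    have hD := (hF.vanishesOnNullPlanes hvan).add_smul_constCurvatureTensor k
    have hDc := hF.add ((isCurvatureLike_constCurvatureTensor hgsymm).smul k)
    have h01 : (F + k • constCurvatureTensor g) (b 0) (b 1) (b 0) (b 1) = 0 := by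
      by_cases h1 : (1 : Fin (n + 1)) = 0
      · simp [h1, hF.apply_self_left]
      · simp [hb _ _, h1, Ne.symm h1, ← hk]
    refine ⟨-k, fun x y z w => ?_⟩
    have h : (F + k • constCurvatureTensor g) x y z w = 0 := by
      rw [hD.eq_zero hb hDc h01]; rfl
    simp only [LinearMap.add_apply, LinearMap.smul_apply, constCurvatureTensor_apply] at h
    linear_combination h

/-- A curvature-like map on a Lorentzian vector space is a constant multiple of
`g(x,z)g(y,w) − g(y,z)g(x,w)` iff it vanishes on every degenerate 2-plane. -/
theorem curvatureLike_const_iff_vanishes_on_degenerate_planes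
    {V : Type*} [AddCommGroup V] [Module ℝ V] [FiniteDimensional ℝ V]
    (g : V →ₗ[ℝ] V →ₗ[ℝ] ℝ) (hgsymm : ∀ x y, g x y = g y x)
    (hgL : IsLorentzian g)
    (F : V →ₗ[ℝ] V →ₗ[ℝ] V →ₗ[ℝ] V →ₗ[ℝ] ℝ) (hF : IsCurvatureLike F) :
    (∃ k : ℝ, ∀ x y z w : V,
        F x y z w = k * (g x z * g y w - g y z * g x w)) ↔
    (∀ x y : V, LinearIndependent ℝ ![x, y] →
        g x x * g y y - (g x y) ^ 2 = 0 → F x y x y = 0) :=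
  curvatureLike_const_iff_vanishes_on_degenerate_planes_general g hgsymm hgL F hF
end

section
/- Let (M, φ, ξ_α, η^α, g) be a Lorentzian S-manifold of dimension 2n+s with s ≥ 2 and ξ_1 the timelike characteristic vector field. Fix p ∈ M and β ∈ {2,…,s}, and set u = ξ_1 + ξ_β at p. Then u is a null vector in N(ξ_1), and the Jacobi operator R̄_u on ū^⊥ vanishes identically. -/
theorem IsLorentzian.separatingLeft {V : Type*} [AddCommGroup V] [Module ℝ V]
    {g : V →ₗ[ℝ] V →ₗ[ℝ] ℝ} (hg : IsLorentzian g) : g.SeparatingLeft := by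
  obtain ⟨n, b, hb⟩ := hg
  intro v hv
  refine b.ext_elem fun j => ?_
  have hvj := hv (b j)
  rw [← b.sum_repr v] at hvj
  simp only [map_sum, map_smul, LinearMap.sum_apply, LinearMap.smul_apply, hb, smul_eq_mul,
    mul_ite, mul_zero, Finset.sum_ite_eq', Finset.mem_univ, if_true] at hvj
  split_ifs at hvj <;> simp_all

section SStructure

-- `R13 z w y = R(z,w)y`, and `g (R13 z w y) x` is `R(x,y,z,w)`.

variable {V : Type*} [AddCommGroup V] [Module ℝ V] {ι : Type*}
  {ξ : ι → V} {g : V →ₗ[ℝ] V →ₗ[ℝ] ℝ} {R13 : V →ₗ[ℝ] V →ₗ[ℝ] V →ₗ[ℝ] V}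

theorem curvature_xi_xi_xi (hpair : ∀ x y z w : V, g (R13 z w y) x = g (R13 x y w) z)
    (hanti2 : ∀ x y z w : V, g (R13 z w y) x = - g (R13 w z y) x)
    (hRξξ : ∀ α β γ (z : V), g (R13 (ξ α) z (ξ γ)) (ξ β) = 0) (α β γ : ι) (w : V) :
    g (R13 (ξ γ) (ξ α) (ξ β)) w = 0 := by
  rw [hanti2, hpair, hanti2, hRξξ, neg_zero, neg_zero]

theorem curvature_xi_xi_apply_xi (hpair : ∀ x y z w : V, g (R13 z w y) x = g (R13 x y w) z)
    (hanti2 : ∀ x y z w : V, g (R13 z w y) x = - g (R13 w z y) x)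
    (hRξξ : ∀ α β γ (z : V), g (R13 (ξ α) z (ξ γ)) (ξ β) = 0) (α β δ : ι) (z : V) :
    g (R13 z (ξ α) (ξ β)) (ξ δ) = 0 := by
  rw [hpair, curvature_xi_xi_xi hpair hanti2 hRξξ]

variable [Fintype ι] (ξ) (η : ι → V →ₗ[ℝ] ℝ)

/-- The component of `x` in `Im φ = ⋂ γ, ker η γ` along `V = Im φ ⊕ span ξ`. -/
def horizontalPart (x : V) : V := x - ∑ γ, η γ x • ξ γ

theorem horizontalPart_add_sum (x : V) : horizontalPart ξ η x + ∑ γ, η γ x • ξ γ = x :=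
  sub_add_cancel _ _

variable {ξ η}

theorem eta_horizontalPart [DecidableEq ι] (hηξ : ∀ α β, η α (ξ β) = if α = β then 1 else 0)
    (x : V) (γ : ι) : η γ (horizontalPart ξ η x) = 0 := by
  simp [horizontalPart, hηξ]

theorem curvature_xi_xi_eq_horizontalPart
    (hpair : ∀ x y z w : V, g (R13 z w y) x = g (R13 x y w) z)
    (hanti2 : ∀ x y z w : V, g (R13 z w y) x = - g (R13 w z y) x)
    (hRξξ : ∀ α β γ (z : V), g (R13 (ξ α) z (ξ γ)) (ξ β) = 0) (α β : ι) (x w : V) :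
    g (R13 x (ξ α) (ξ β)) w
      = g (R13 (horizontalPart ξ η x) (ξ α) (ξ β)) (horizontalPart ξ η w) := by
  conv_lhs => rw [← horizontalPart_add_sum ξ η x, ← horizontalPart_add_sum ξ η w]
  simp [curvature_xi_xi_xi hpair hanti2 hRξξ, curvature_xi_xi_apply_xi hpair hanti2 hRξξ]

theorem jacobi_xi_add_xi_apply [DecidableEq ι] {ε : ι → ℝ}
    (hηξ : ∀ α β, η α (ξ β) = if α = β then 1 else 0)
    (hpair : ∀ x y z w : V, g (R13 z w y) x = g (R13 x y w) z)
    (hanti2 : ∀ x y z w : V, g (R13 z w y) x = - g (R13 w z y) x)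
    (hRξξ : ∀ α β γ (z : V), g (R13 (ξ α) z (ξ γ)) (ξ β) = 0)
    (hRIm : ∀ x y : V, (∀ γ, η γ x = 0) → (∀ γ, η γ y = 0) →
      ∀ α β, g (R13 y (ξ β) (ξ α)) x = ε α * ε β * g x y)
    (a b : ι) (x w : V) :
    g (R13 x (ξ a + ξ b) (ξ a + ξ b)) w
      = (ε a + ε b) ^ 2 * g (horizontalPart ξ η w) (horizontalPart ξ η x) := by
  have hR : ∀ α β, g (R13 x (ξ α) (ξ β)) w
      = ε β * ε α * g (horizontalPart ξ η w) (horizontalPart ξ η x) := fun α β => by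
    rw [curvature_xi_xi_eq_horizontalPart hpair hanti2 hRξξ,
      hRIm _ _ (eta_horizontalPart hηξ w) (eta_horizontalPart hηξ x)]
  simp only [map_add, LinearMap.add_apply, hR]
  ring

end SStructure

theorem jacobi_operator_vanishes_on_xi_sum_general
    {V : Type*} [AddCommGroup V] [Module ℝ V]
    (g : V →ₗ[ℝ] V →ₗ[ℝ] ℝ) (hgL : IsLorentzian g)
    {s₀ : ℕ}
    (ξ : Fin (s₀ + 2) → V) (η : Fin (s₀ + 2) → V →ₗ[ℝ] ℝ)
    (ε : Fin (s₀ + 2) → ℝ)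
    (hηξ : ∀ α β, η α (ξ β) = if α = β then 1 else 0)
    (hε0 : ε 0 = -1) (hεpos : ∀ α, α ≠ 0 → ε α = 1)
    (hgξξ : ∀ α β, g (ξ α) (ξ β) = if α = β then ε α else 0)
    (R13 : V →ₗ[ℝ] V →ₗ[ℝ] V →ₗ[ℝ] V)
    -- curvature symmetries of `R(X,Y,Z,W) = g(R13 Z W Y, X)`
    (hpair : ∀ x y z w : V, g (R13 z w y) x = g (R13 x y w) z)
    (hanti2 : ∀ x y z w : V, g (R13 z w y) x = - g (R13 w z y) x)
    -- curvature identities of the Lorentzian `S`-structure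
    (hRIm : ∀ x y z : V, (∀ γ, η γ x = 0) → (∀ γ, η γ y = 0) → (∀ γ, η γ z = 0) →
      ∀ α β,
        g (R13 z (ξ α) y) x = 0 ∧ g (R13 y (ξ β) (ξ α)) x = ε α * ε β * g x y)
    (hRξξ : ∀ α β γ (z : V), g (R13 (ξ α) z (ξ γ)) (ξ β) = 0)
    (β : Fin (s₀ + 2)) (hβ : β ≠ 0) :
    g (ξ 0 + ξ β) (ξ 0 + ξ β) = 0 ∧
    g (ξ 0 + ξ β) (ξ 0) = -1 ∧
    ∀ x : V, g x (ξ 0 + ξ β) = 0 →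
      R13 x (ξ 0 + ξ β) (ξ 0 + ξ β) ∈ Submodule.span ℝ {ξ 0 + ξ β} := by
  have hεβ : ε β = 1 := hεpos β hβ
  refine ⟨by simp [hgξξ, hβ, hβ.symm, hε0, hεβ], by simp [hgξξ, hβ, hε0], fun x _ => ?_⟩
  suffices R13 x (ξ 0 + ξ β) (ξ 0 + ξ β) = 0 by rw [this]; exact Submodule.zero_mem _
  refine hgL.separatingLeft _ fun w => ?_
  rw [jacobi_xi_add_xi_apply hηξ hpair hanti2 hRξξ
    (fun x y hx hy α β => (hRIm x y y hx hy hy α β).2), hε0, hεβ]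
  ring

/-- On a Lorentzian `S`-manifold with `s = s₀ + 2 ≥ 2` characteristic vector fields
(the timelike one `ξ_1` indexed here by `0`), the vector `u = ξ_1 + ξ_β` (`β ≥ 2`) is
null, lies in the null congruence `N(ξ_1)`, and its Jacobi operator `R̄_u` on
`ū^⊥ = u^⊥/span(u)` vanishes identically (i.e. `R(x,u)u ∈ span(u)` for all `x ∈ u^⊥`).
Here `R13 z w y = R(z,w)y` and `R(X,Y,Z,W) = g(R(Z,W)Y,X)`. -/
theorem jacobi_operator_vanishes_on_xi_sum
    {V : Type*} [AddCommGroup V] [Module ℝ V] [FiniteDimensional ℝ V]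
    (g : V →ₗ[ℝ] V →ₗ[ℝ] ℝ) (hgsymm : ∀ x y, g x y = g y x)
    (hgL : IsLorentzian g)
    {s₀ : ℕ}
    (φ : V →ₗ[ℝ] V) (ξ : Fin (s₀ + 2) → V) (η : Fin (s₀ + 2) → V →ₗ[ℝ] ℝ)
    (ε : Fin (s₀ + 2) → ℝ)
    (hphi2 : ∀ x, φ (φ x) = -x + ∑ α, η α x • ξ α)
    (hηξ : ∀ α β, η α (ξ β) = if α = β then 1 else 0)
    (hφξ : ∀ α, φ (ξ α) = 0) (hηφ : ∀ α x, η α (φ x) = 0)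
    (hε0 : ε 0 = -1) (hεpos : ∀ α, α ≠ 0 → ε α = 1)
    (hgξξ : ∀ α β, g (ξ α) (ξ β) = if α = β then ε α else 0)
    (hgxi : ∀ α (x : V), g x (ξ α) = ε α * η α x)
    (hmetriccompat : ∀ x y, g (φ x) (φ y) = g x y - ∑ α, ε α * (η α x * η α y))
    (R13 : V →ₗ[ℝ] V →ₗ[ℝ] V →ₗ[ℝ] V)
    -- curvature symmetries of `R(X,Y,Z,W) = g(R13 Z W Y, X)`
    (hpair : ∀ x y z w : V, g (R13 z w y) x = g (R13 x y w) z)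
    (hanti1 : ∀ x y z w : V, g (R13 z w y) x = - g (R13 z w x) y)
    (hanti2 : ∀ x y z w : V, g (R13 z w y) x = - g (R13 w z y) x)
    (hbianchi : ∀ x y z w : V,
      g (R13 z w y) x + g (R13 x w z) y + g (R13 y w x) z = 0)
    -- curvature identities of the Lorentzian `S`-structure
    (hRIm : ∀ x y z : V, (∀ γ, η γ x = 0) → (∀ γ, η γ y = 0) → (∀ γ, η γ z = 0) →
      ∀ α β,
        g (R13 z (ξ α) y) x = 0 ∧ g (R13 y (ξ β) (ξ α)) x = ε α * ε β * g x y)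
    (hRξ : ∀ α β (y z : V),
      g (R13 (ξ α) z y) (ξ β) = ε β * ε α * g (φ y) (φ z))
    (hRξξ : ∀ α β γ (z : V), g (R13 (ξ α) z (ξ γ)) (ξ β) = 0)
    (β : Fin (s₀ + 2)) (hβ : β ≠ 0) :
    g (ξ 0 + ξ β) (ξ 0 + ξ β) = 0 ∧
    g (ξ 0 + ξ β) (ξ 0) = -1 ∧
    ∀ x : V, g x (ξ 0 + ξ β) = 0 →
      R13 x (ξ 0 + ξ β) (ξ 0 + ξ β) ∈ Submodule.span ℝ {ξ 0 + ξ β} :=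
  jacobi_operator_vanishes_on_xi_sum_general g hgL ξ η ε hηξ hε0 hεpos hgξξ R13 hpair hanti2 hRIm
    hRξξ β hβ
end

section
/- A Lorentzian S-manifold (M, φ, ξ_α, η^α, g) of dimension 2n+s with s ≥ 2 is never null Osserman with respect to (ξ_1)_p at any point p: there exist u, v ∈ N((ξ_1)_p) whose Jacobi operators R̄_u and R̄_v have different eigenvalue structure (R̄_u = 0 for u = ξ_1+ξ_2, while R̄_v(ξ̄_β) = Σ_{α=2}^s ξ̄_α ≠ 0 for v = ξ_1 + x with x a unit vector in Im(φ_p)). -/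
theorem LinearMap.SeparatingLeft.eq_of_forall_apply_eq {R M N P : Type*} [CommRing R]
    [AddCommGroup M] [Module R M] [AddCommGroup N] [Module R N] [AddCommGroup P] [Module R P]
    {B : M →ₗ[R] N →ₗ[R] P} (hB : B.SeparatingLeft) {a b : M} (h : ∀ w, B a w = B b w) :
    a = b :=
  LinearMap.ker_eq_bot.mp (LinearMap.separatingLeft_iff_ker_eq_bot.mp hB) (LinearMap.ext h)

section SStructure

variable {V ι : Type*} [AddCommGroup V] [Module ℝ V] {g : V →ₗ[ℝ] V →ₗ[ℝ] ℝ} {φ : V →ₗ[ℝ] V}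
  {ξ : ι → V} {η : ι → V →ₗ[ℝ] ℝ} {ε : ι → ℝ} {R13 : V →ₗ[ℝ] V →ₗ[ℝ] V →ₗ[ℝ] V}

theorem sum_xi_notMem_span_xi_add [DecidableEq ι]
    (hηξ : ∀ α β, η α (ξ β) = if α = β then 1 else 0) {s : Finset ι} {a b : ι} (hb : b ∈ s)
    (hab : a ≠ b) {x : V} (hx : η b x = 0) :
    ∑ α ∈ s, ξ α ∉ Submodule.span ℝ {ξ a + x} := by
  rw [Submodule.mem_span_singleton]
  rintro ⟨c, hc⟩
  have h := congrArg (η b) hc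
  simp [hηξ, hx, hab.symm, hb] at h

theorem R13_swap (hg : g.SeparatingLeft)
    (hanti2 : ∀ x y z w : V, g (R13 z w y) x = - g (R13 w z y) x) (z w : V) :
    R13 w z = -R13 z w :=
  LinearMap.ext fun y => hg.eq_of_forall_apply_eq fun u => by simp [hanti2 u y w z]

theorem R13_apply_xi_xi (hg : g.SeparatingLeft) (hgsymm : ∀ x y, g x y = g y x)
    (hφφ : ∀ z w, g (φ (φ z)) w = -g (φ z) (φ w))
    (hanti1 : ∀ x y z w : V, g (R13 z w y) x = - g (R13 z w x) y)
    (hanti2 : ∀ x y z w : V, g (R13 z w y) x = - g (R13 w z y) x)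
    (hRξ : ∀ α β (y z : V), g (R13 (ξ α) z y) (ξ β) = ε β * ε α * g (φ y) (φ z))
    (z : V) (a c : ι) :
    R13 z (ξ a) (ξ c) = -(ε a * ε c) • φ (φ z) :=
  hg.eq_of_forall_apply_eq fun w => by
    rw [hanti1, hanti2, neg_neg, hRξ, LinearMap.map_smul₂, smul_eq_mul, hφφ, hgsymm (φ z)]
    ring

theorem R13_xi_xi_eq_zero (hg : g.SeparatingLeft) (hgsymm : ∀ x y, g x y = g y x)
    (hφφ : ∀ z w, g (φ (φ z)) w = -g (φ z) (φ w))
    (hanti1 : ∀ x y z w : V, g (R13 z w y) x = - g (R13 z w x) y)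
    (hanti2 : ∀ x y z w : V, g (R13 z w y) x = - g (R13 w z y) x)
    (hbianchi : ∀ x y z w : V, g (R13 z w y) x + g (R13 x w z) y + g (R13 y w x) z = 0)
    (hRξ : ∀ α β (y z : V), g (R13 (ξ α) z y) (ξ β) = ε β * ε α * g (φ y) (φ z))
    (a c : ι) :
    R13 (ξ a) (ξ c) = 0 := by
  refine LinearMap.ext fun y => hg.eq_of_forall_apply_eq fun w => ?_
  have h := hbianchi w y (ξ a) (ξ c)
  rw [R13_apply_xi_xi hg hgsymm hφφ hanti1 hanti2 hRξ, hanti2 (ξ a), hRξ,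
    LinearMap.map_smul₂, smul_eq_mul, hφφ] at h
  simp only [LinearMap.zero_apply, map_zero]
  linarith

theorem R13_apply_xi_add_xi_eq_zero (hg : g.SeparatingLeft) (hgsymm : ∀ x y, g x y = g y x)
    (hφφ : ∀ z w, g (φ (φ z)) w = -g (φ z) (φ w))
    (hanti1 : ∀ x y z w : V, g (R13 z w y) x = - g (R13 z w x) y)
    (hanti2 : ∀ x y z w : V, g (R13 z w y) x = - g (R13 w z y) x)
    (hRξ : ∀ α β (y z : V), g (R13 (ξ α) z y) (ξ β) = ε β * ε α * g (φ y) (φ z))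
    {a c : ι} (hac : ε a + ε c = 0) (y : V) :
    R13 y (ξ a + ξ c) (ξ a + ξ c) = 0 := by
  simp only [map_add, LinearMap.add_apply,
    R13_apply_xi_xi hg hgsymm hφφ hanti1 hanti2 hRξ]
  rw [show ε c = -ε a by linarith]
  module

variable [Fintype ι]

theorem g_phi_phi_left (hgsymm : ∀ x y, g x y = g y x)
    (hphi2 : ∀ x, φ (φ x) = -x + ∑ α, η α x • ξ α) (hgxi : ∀ α (x : V), g x (ξ α) = ε α * η α x)
    (hmetriccompat : ∀ x y, g (φ x) (φ y) = g x y - ∑ α, ε α * (η α x * η α y)) (z w : V) :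
    g (φ (φ z)) w = -g (φ z) (φ w) := by
  have hξw : ∀ α, g (ξ α) w = ε α * η α w := fun α => by rw [hgsymm, hgxi]
  simp [hphi2, hmetriccompat, hξw, mul_left_comm, neg_add_eq_sub]

theorem eq_of_pairing_ker_eta_of_pairing_xi [DecidableEq ι] (hg : g.SeparatingLeft)
    (hηξ : ∀ α β, η α (ξ β) = if α = β then 1 else 0) {a b : V}
    (hker : ∀ w, (∀ γ, η γ w = 0) → g a w = g b w) (hξ : ∀ γ, g a (ξ γ) = g b (ξ γ)) :
    a = b := by
  refine hg.eq_of_forall_apply_eq fun w => ?_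
  have hw : ∀ γ, η γ (w - ∑ α, η α w • ξ α) = 0 := fun γ => by simp [hηξ]
  have hdec : w = (w - ∑ α, η α w • ξ α) + ∑ α, η α w • ξ α := by abel
  rw [hdec, map_add, map_add, hker _ hw]
  simp [hξ]

theorem R13_xi_apply_of_ker [DecidableEq ι] (hg : g.SeparatingLeft)
    (hηξ : ∀ α β, η α (ξ β) = if α = β then 1 else 0) (hgsymm : ∀ x y, g x y = g y x)
    (hgxi : ∀ α (x : V), g x (ξ α) = ε α * η α x)
    (hmetriccompat : ∀ x y, g (φ x) (φ y) = g x y - ∑ α, ε α * (η α x * η α y))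
    (hanti2 : ∀ x y z w : V, g (R13 z w y) x = - g (R13 w z y) x)
    (hRIm : ∀ x y z : V, (∀ γ, η γ x = 0) → (∀ γ, η γ y = 0) → (∀ γ, η γ z = 0) →
      ∀ α β, g (R13 z (ξ α) y) x = 0 ∧ g (R13 y (ξ β) (ξ α)) x = ε α * ε β * g x y)
    (hRξ : ∀ α β (y z : V), g (R13 (ξ α) z y) (ξ β) = ε β * ε α * g (φ y) (φ z))
    {x y : V} (hx : ∀ γ, η γ x = 0) (hy : ∀ γ, η γ y = 0) (β : ι) :
    R13 (ξ β) x y = (ε β * g x y) • ∑ γ, ξ γ := by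
  have hξg : ∀ w γ, g (ξ γ) w = ε γ * η γ w := fun w γ => by rw [hgsymm, hgxi]
  refine eq_of_pairing_ker_eta_of_pairing_xi hg hηξ (fun w hw => ?_) fun γ => ?_
  · rw [hanti2, (hRIm w y x hw hy hx β β).1]
    simp [hξg, hw]
  · rw [hRξ, hmetriccompat]
    simp [hx, hy, hξg, hηξ, hgsymm y x]
    ring

theorem R13_xi_apply_xi_add_of_ker [DecidableEq ι] (hg : g.SeparatingLeft)
    (hηξ : ∀ α β, η α (ξ β) = if α = β then 1 else 0) (hgsymm : ∀ x y, g x y = g y x)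
    (hphi2 : ∀ x, φ (φ x) = -x + ∑ α, η α x • ξ α) (hφξ : ∀ α, φ (ξ α) = 0)
    (hgxi : ∀ α (x : V), g x (ξ α) = ε α * η α x)
    (hmetriccompat : ∀ x y, g (φ x) (φ y) = g x y - ∑ α, ε α * (η α x * η α y))
    (hanti1 : ∀ x y z w : V, g (R13 z w y) x = - g (R13 z w x) y)
    (hanti2 : ∀ x y z w : V, g (R13 z w y) x = - g (R13 w z y) x)
    (hbianchi : ∀ x y z w : V, g (R13 z w y) x + g (R13 x w z) y + g (R13 y w x) z = 0)
    (hRIm : ∀ x y z : V, (∀ γ, η γ x = 0) → (∀ γ, η γ y = 0) → (∀ γ, η γ z = 0) →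
      ∀ α β, g (R13 z (ξ α) y) x = 0 ∧ g (R13 y (ξ β) (ξ α)) x = ε α * ε β * g x y)
    (hRξ : ∀ α β (y z : V), g (R13 (ξ α) z y) (ξ β) = ε β * ε α * g (φ y) (φ z))
    {x : V} (hx : ∀ γ, η γ x = 0) (β a : ι) :
    R13 (ξ β) (ξ a + x) (ξ a + x) = ε β • (g x x • ∑ γ, ξ γ - ε a • x) := by
  have hφφ := g_phi_phi_left hgsymm hphi2 hgxi hmetriccompat
  have hφφx : φ (φ x) = -x := by simp [hphi2, hx]
  simp only [map_add, LinearMap.add_apply]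
  rw [R13_apply_xi_xi hg hgsymm hφφ hanti1 hanti2 hRξ, hφξ, map_zero,
    R13_xi_xi_eq_zero hg hgsymm hφφ hanti1 hanti2 hbianchi hRξ,
    R13_xi_apply_of_ker hg hηξ hgsymm hgxi hmetriccompat hanti2 hRIm hRξ hx hx,
    R13_swap hg hanti2 x, LinearMap.neg_apply,
    R13_apply_xi_xi hg hgsymm hφφ hanti1 hanti2 hRξ, hφφx]
  simp only [LinearMap.zero_apply]
  module

end SStructure

/-- Here `R13 z w y = R(z,w)y` and `R(X,Y,Z,W) = g(R(Z,W)Y,X)`, `ξ_1` is `ξ 0`, and classes in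
`v̄^⊥ = v^⊥/span(v)` are represented via membership in `span(v)`. -/
theorem lorentzian_sManifold_not_null_osserman_general
    {V : Type*} [AddCommGroup V] [Module ℝ V]
    (g : V →ₗ[ℝ] V →ₗ[ℝ] ℝ) (hgsymm : ∀ x y, g x y = g y x)
    (hgL : IsLorentzian g)
    {s₀ : ℕ}
    (φ : V →ₗ[ℝ] V) (ξ : Fin (s₀ + 2) → V) (η : Fin (s₀ + 2) → V →ₗ[ℝ] ℝ)
    (ε : Fin (s₀ + 2) → ℝ)
    (hphi2 : ∀ x, φ (φ x) = -x + ∑ α, η α x • ξ α)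
    (hηξ : ∀ α β, η α (ξ β) = if α = β then 1 else 0)
    (hφξ : ∀ α, φ (ξ α) = 0)
    (hε0 : ε 0 = -1) (hεpos : ∀ α, α ≠ 0 → ε α = 1)
    (hgxi : ∀ α (x : V), g x (ξ α) = ε α * η α x)
    (hmetriccompat : ∀ x y, g (φ x) (φ y) = g x y - ∑ α, ε α * (η α x * η α y))
    (R13 : V →ₗ[ℝ] V →ₗ[ℝ] V →ₗ[ℝ] V)
    -- curvature symmetries of `R(X,Y,Z,W) = g(R13 Z W Y, X)`
    (hanti1 : ∀ x y z w : V, g (R13 z w y) x = - g (R13 z w x) y)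
    (hanti2 : ∀ x y z w : V, g (R13 z w y) x = - g (R13 w z y) x)
    (hbianchi : ∀ x y z w : V,
      g (R13 z w y) x + g (R13 x w z) y + g (R13 y w x) z = 0)
    -- curvature identities of the Lorentzian `S`-structure
    (hRIm : ∀ x y z : V, (∀ γ, η γ x = 0) → (∀ γ, η γ y = 0) → (∀ γ, η γ z = 0) →
      ∀ α β,
        g (R13 z (ξ α) y) x = 0 ∧ g (R13 y (ξ β) (ξ α)) x = ε α * ε β * g x y)
    (hRξ : ∀ α β (y z : V),
      g (R13 (ξ α) z y) (ξ β) = ε β * ε α * g (φ y) (φ z))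
    (x : V) (hx : ∀ γ, η γ x = 0) (hxx : g x x = 1) :
    -- `u = ξ_1 + ξ_2` and `v = ξ_1 + x` both lie in `N(ξ_1)`
    (g (ξ 0 + ξ 1) (ξ 0 + ξ 1) = 0 ∧ g (ξ 0 + ξ 1) (ξ 0) = -1) ∧
    (g (ξ 0 + x) (ξ 0 + x) = 0 ∧ g (ξ 0 + x) (ξ 0) = -1) ∧
    -- `R̄_u = 0`
    (∀ y : V, g y (ξ 0 + ξ 1) = 0 →
      R13 y (ξ 0 + ξ 1) (ξ 0 + ξ 1) ∈ Submodule.span ℝ {ξ 0 + ξ 1}) ∧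
    -- `R̄_v(ξ̄_β) = ∑_{α=2}^s ξ̄_α`
    (∀ β : Fin (s₀ + 2), β ≠ 0 →
      R13 (ξ β) (ξ 0 + x) (ξ 0 + x) - ∑ α ∈ Finset.univ.filter (· ≠ (0 : Fin (s₀ + 2))), ξ α
        ∈ Submodule.span ℝ {ξ 0 + x}) ∧
    -- `∑_{α=2}^s ξ̄_α ≠ 0`
    (∑ α ∈ Finset.univ.filter (· ≠ (0 : Fin (s₀ + 2))), ξ α)
      ∉ Submodule.span ℝ {ξ 0 + x} := by
  have hg := hgL.separatingLeft
  have hφφ := g_phi_phi_left hgsymm hphi2 hgxi hmetriccompat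
  have h10 : (1 : Fin (s₀ + 2)) ≠ 0 := one_ne_zero
  have hξξ : ∀ α β, g (ξ α) (ξ β) = if β = α then ε β else 0 := fun α β => by
    rw [hgxi, hηξ]; split_ifs <;> simp
  have hξx : g (ξ 0) x = 0 := by rw [hgsymm, hgxi, hx, mul_zero]
  have hsum : ∑ α, ξ α = ξ 0 + ∑ α ∈ Finset.univ.filter (· ≠ (0 : Fin (s₀ + 2))), ξ α := by
    rw [Finset.filter_ne', Finset.add_sum_erase _ _ (Finset.mem_univ 0)]
  refine ⟨⟨?_, ?_⟩, ⟨?_, ?_⟩, fun y _ => ?_, fun β hβ => ?_, ?_⟩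
  · simp [hξξ, h10, h10.symm, hε0, hεpos 1 h10]
  · simp [hξξ, hε0]
  · simp [hξξ, hξx, hgxi, hx, hxx, hε0]
  · simp [hξξ, hgxi, hx, hε0]
  · rw [R13_apply_xi_add_xi_eq_zero hg hgsymm hφφ hanti1 hanti2 hRξ
      (by rw [hε0, hεpos 1 h10]; norm_num)]
    exact zero_mem _
  · rw [R13_xi_apply_xi_add_of_ker hg hηξ hgsymm hphi2 hφξ hgxi hmetriccompat
      hanti1 hanti2 hbianchi hRIm hRξ hx, hεpos β hβ, hxx, hε0, hsum]
    convert Submodule.mem_span_singleton_self (ξ 0 + x) using 1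
    module
  · exact sum_xi_notMem_span_xi_add hηξ (by simp) h10.symm (hx 1)

/-- A Lorentzian `S`-manifold with `s = s₀ + 2 ≥ 2` characteristic vector fields is
never null Osserman with respect to `ξ_1` (indexed here by `0`): for `u = ξ_1 + ξ_2`
and `v = ξ_1 + x` (with `x` a unit vector of `Im φ`), both in `N(ξ_1)`, the Jacobi
operator `R̄_u` vanishes while `R̄_v(ξ̄_β) = ∑_{α=2}^s ξ̄_α ≠ 0` for every `β ≥ 2`.
Here `R13 z w y = R(z,w)y` and `R(X,Y,Z,W) = g(R(Z,W)Y,X)`; classes in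
`v̄^⊥ = v^⊥/span(v)` are represented via membership in `span(v)`. -/
theorem lorentzian_sManifold_not_null_osserman
    {V : Type*} [AddCommGroup V] [Module ℝ V] [FiniteDimensional ℝ V]
    (g : V →ₗ[ℝ] V →ₗ[ℝ] ℝ) (hgsymm : ∀ x y, g x y = g y x)
    (hgL : IsLorentzian g)
    {s₀ : ℕ}
    (φ : V →ₗ[ℝ] V) (ξ : Fin (s₀ + 2) → V) (η : Fin (s₀ + 2) → V →ₗ[ℝ] ℝ)
    (ε : Fin (s₀ + 2) → ℝ)
    (hphi2 : ∀ x, φ (φ x) = -x + ∑ α, η α x • ξ α)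
    (hηξ : ∀ α β, η α (ξ β) = if α = β then 1 else 0)
    (hφξ : ∀ α, φ (ξ α) = 0) (hηφ : ∀ α x, η α (φ x) = 0)
    (hε0 : ε 0 = -1) (hεpos : ∀ α, α ≠ 0 → ε α = 1)
    (hgξξ : ∀ α β, g (ξ α) (ξ β) = if α = β then ε α else 0)
    (hgxi : ∀ α (x : V), g x (ξ α) = ε α * η α x)
    (hmetriccompat : ∀ x y, g (φ x) (φ y) = g x y - ∑ α, ε α * (η α x * η α y))
    (R13 : V →ₗ[ℝ] V →ₗ[ℝ] V →ₗ[ℝ] V)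
    -- curvature symmetries of `R(X,Y,Z,W) = g(R13 Z W Y, X)`
    (hpair : ∀ x y z w : V, g (R13 z w y) x = g (R13 x y w) z)
    (hanti1 : ∀ x y z w : V, g (R13 z w y) x = - g (R13 z w x) y)
    (hanti2 : ∀ x y z w : V, g (R13 z w y) x = - g (R13 w z y) x)
    (hbianchi : ∀ x y z w : V,
      g (R13 z w y) x + g (R13 x w z) y + g (R13 y w x) z = 0)
    -- curvature identities of the Lorentzian `S`-structure
    (hRIm : ∀ x y z : V, (∀ γ, η γ x = 0) → (∀ γ, η γ y = 0) → (∀ γ, η γ z = 0) →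
      ∀ α β,
        g (R13 z (ξ α) y) x = 0 ∧ g (R13 y (ξ β) (ξ α)) x = ε α * ε β * g x y)
    (hRξ : ∀ α β (y z : V),
      g (R13 (ξ α) z y) (ξ β) = ε β * ε α * g (φ y) (φ z))
    (hRξξ : ∀ α β γ (z : V), g (R13 (ξ α) z (ξ γ)) (ξ β) = 0)
    (x : V) (hx : ∀ γ, η γ x = 0) (hxx : g x x = 1) :
    -- `u = ξ_1 + ξ_2` and `v = ξ_1 + x` both lie in `N(ξ_1)`
    (g (ξ 0 + ξ 1) (ξ 0 + ξ 1) = 0 ∧ g (ξ 0 + ξ 1) (ξ 0) = -1) ∧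
    (g (ξ 0 + x) (ξ 0 + x) = 0 ∧ g (ξ 0 + x) (ξ 0) = -1) ∧
    -- `R̄_u = 0`
    (∀ y : V, g y (ξ 0 + ξ 1) = 0 →
      R13 y (ξ 0 + ξ 1) (ξ 0 + ξ 1) ∈ Submodule.span ℝ {ξ 0 + ξ 1}) ∧
    -- `R̄_v(ξ̄_β) = ∑_{α=2}^s ξ̄_α`
    (∀ β : Fin (s₀ + 2), β ≠ 0 →
      R13 (ξ β) (ξ 0 + x) (ξ 0 + x) - ∑ α ∈ Finset.univ.filter (· ≠ (0 : Fin (s₀ + 2))), ξ α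
        ∈ Submodule.span ℝ {ξ 0 + x}) ∧
    -- `∑_{α=2}^s ξ̄_α ≠ 0`
    (∑ α ∈ Finset.univ.filter (· ≠ (0 : Fin (s₀ + 2))), ξ α)
      ∉ Submodule.span ℝ {ξ 0 + x} :=
  lorentzian_sManifold_not_null_osserman_general g hgsymm hgL φ ξ η ε hphi2 hηξ hφξ hε0 hεpos hgxi
    hmetriccompat R13 hanti1 hanti2 hbianchi hRIm hRξ x hx hxx
end

section
/- Let (M,φ,ξ_α,η^α,g) be a Lorentzian S-manifold, p ∈ M, x ∈ S_φ((ξ_1)_p) a unit vector in Im(φ_p), and u = (ξ_1)_p + x ∈ N_φ((ξ_1)_p). Set V = x^⊥ ∩ Im(φ_p). Then for all y, z ∈ V: ḡ(R̄_u(ȳ), z̄) = g(y,z) + g(R_x(y), z), where R_x is the Jacobi operator with respect to the spacelike unit vector x. Moreover ḡ(R̄_u(ξ̄_α), ξ̄_β) = 1 and ḡ(R̄_u(ȳ), ξ̄_β) = 0 for α, β ∈ {2,…,s} and y ∈ V; and g(R_x(y), ξ_1) = 0, g(R_x(ξ_1), ξ_1) = 1, g(R_x(ξ_1), ξ_α)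 = −1 for α ≥ 2. -/
section

variable {V ι : Type*} [AddCommGroup V] [Module ℝ V]
  {g : V →ₗ[ℝ] V →ₗ[ℝ] ℝ} {R13 : V →ₗ[ℝ] V →ₗ[ℝ] V →ₗ[ℝ] V}
  {φ : V →ₗ[ℝ] V} {ξ : ι → V} {η : ι → V →ₗ[ℝ] ℝ} {ε : ι → ℝ}

theorem curv_add_add_pairing (a b u x : V) :
    g (R13 a (u + x) (u + x)) b =
      g (R13 a u u) b + g (R13 a u x) b + g (R13 a x u) b + g (R13 a x x) b := by
  simp only [map_add, LinearMap.add_apply]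
  ring

theorem metric_phi_phi_of_eta_eq_zero [Fintype ι]
    (hmetriccompat : ∀ x y, g (φ x) (φ y) = g x y - ∑ α, ε α * (η α x * η α y))
    {y : V} (hy : ∀ γ, η γ y = 0) (z : V) :
    g (φ y) (φ z) = g y z := by
  simp [hmetriccompat, hy]

theorem curv_xi_pairing_xi
    (hpair : ∀ x y z w : V, g (R13 z w y) x = g (R13 x y w) z)
    (hanti1 : ∀ x y z w : V, g (R13 z w y) x = - g (R13 z w x) y)
    (hRξ : ∀ α β (y z : V),
      g (R13 (ξ α) z y) (ξ β) = ε β * ε α * g (φ y) (φ z))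
    (α β : ι) (y w : V) :
    g (R13 y (ξ α) w) (ξ β) = -(ε α * ε β * g (φ y) (φ w)) := by
  rw [hpair, hanti1, hRξ]

theorem jacobi_pairing_xi_of_eta_eq_zero
    (hpair : ∀ x y z w : V, g (R13 z w y) x = g (R13 x y w) z)
    (hanti1 : ∀ x y z w : V, g (R13 z w y) x = - g (R13 z w x) y)
    (hRIm : ∀ x y z : V, (∀ γ, η γ x = 0) → (∀ γ, η γ y = 0) → (∀ γ, η γ z = 0) →
      ∀ α β,
        g (R13 z (ξ α) y) x = 0 ∧ g (R13 y (ξ β) (ξ α)) x = ε α * ε β * g x y)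
    {x y : V} (hx : ∀ γ, η γ x = 0) (hy : ∀ γ, η γ y = 0) (β : ι) :
    g (R13 y x x) (ξ β) = 0 := by
  rw [hanti1, hpair, (hRIm y x x hy hx hx β β).1, neg_zero]

theorem curv_eta_eq_zero_xi_pairing_xi [Fintype ι]
    (hgsymm : ∀ x y, g x y = g y x)
    (hmetriccompat : ∀ x y, g (φ x) (φ y) = g x y - ∑ α, ε α * (η α x * η α y))
    (hpair : ∀ x y z w : V, g (R13 z w y) x = g (R13 x y w) z)
    (hanti1 : ∀ x y z w : V, g (R13 z w y) x = - g (R13 z w x) y)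
    (hbianchi : ∀ x y z w : V,
      g (R13 z w y) x + g (R13 x w z) y + g (R13 y w x) z = 0)
    (hRIm : ∀ x y z : V, (∀ γ, η γ x = 0) → (∀ γ, η γ y = 0) → (∀ γ, η γ z = 0) →
      ∀ α β,
        g (R13 z (ξ α) y) x = 0 ∧ g (R13 y (ξ β) (ξ α)) x = ε α * ε β * g x y)
    (hRξ : ∀ α β (y z : V),
      g (R13 (ξ α) z y) (ξ β) = ε β * ε α * g (φ y) (φ z))
    {x y : V} (hx : ∀ γ, η γ x = 0) (hy : ∀ γ, η γ y = 0) (α β : ι) :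
    g (R13 y x (ξ α)) (ξ β) = 0 := by
  have h0 : ∀ γ, η γ (0 : V) = 0 := fun γ => map_zero _
  have hφ : g (R13 (ξ β) x y) (ξ α) = ε α * ε β * g x y := by
    rw [hRξ, metric_phi_phi_of_eta_eq_zero hmetriccompat hy, hgsymm y]
  have hIm : g (R13 (ξ α) x (ξ β)) y = -(ε α * ε β * g x y) := by
    rw [hpair, hanti1, (hRIm x y 0 hx hy h0 α β).2]
  linarith [hbianchi (ξ β) (ξ α) y x]

end

theorem null_jacobi_vs_spacelike_jacobi_computations_general
    {V : Type*} [AddCommGroup V] [Module ℝ V]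
    (g : V →ₗ[ℝ] V →ₗ[ℝ] ℝ) (hgsymm : ∀ x y, g x y = g y x)
    {s₀ : ℕ}
    (φ : V →ₗ[ℝ] V) (ξ : Fin (s₀ + 1) → V) (η : Fin (s₀ + 1) → V →ₗ[ℝ] ℝ)
    (ε : Fin (s₀ + 1) → ℝ)
    (hφξ : ∀ α, φ (ξ α) = 0)
    (hε0 : ε 0 = -1) (hεpos : ∀ α, α ≠ 0 → ε α = 1)
    (hmetriccompat : ∀ x y, g (φ x) (φ y) = g x y - ∑ α, ε α * (η α x * η α y))
    (R13 : V →ₗ[ℝ] V →ₗ[ℝ] V →ₗ[ℝ] V)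
    -- curvature symmetries of `R(X,Y,Z,W) = g(R13 Z W Y, X)`
    (hpair : ∀ x y z w : V, g (R13 z w y) x = g (R13 x y w) z)
    (hanti1 : ∀ x y z w : V, g (R13 z w y) x = - g (R13 z w x) y)
    (hbianchi : ∀ x y z w : V,
      g (R13 z w y) x + g (R13 x w z) y + g (R13 y w x) z = 0)
    -- curvature identities of the Lorentzian `S`-structure
    (hRIm : ∀ x y z : V, (∀ γ, η γ x = 0) → (∀ γ, η γ y = 0) → (∀ γ, η γ z = 0) →
      ∀ α β,
        g (R13 z (ξ α) y) x = 0 ∧ g (R13 y (ξ β) (ξ α)) x = ε α * ε β * g x y)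
    (hRξ : ∀ α β (y z : V),
      g (R13 (ξ α) z y) (ξ β) = ε β * ε α * g (φ y) (φ z))
    (hRξξ : ∀ α β γ (z : V), g (R13 (ξ α) z (ξ γ)) (ξ β) = 0)
    (x : V) (hx : ∀ γ, η γ x = 0) (hxx : g x x = 1) :
    -- `ḡ(R̄_u(ȳ),z̄) = g(y,z) + g(R_x(y),z)` for `y,z ∈ V = x^⊥ ∩ Im(φ)`
    (∀ y z : V, (∀ γ, η γ y = 0) → (∀ γ, η γ z = 0) → g x y = 0 → g x z = 0 →
      g (R13 y (ξ 0 + x) (ξ 0 + x)) z = g y z + g (R13 y x x) z) ∧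
    -- `ḡ(R̄_u(ξ̄_α),ξ̄_β) = 1` for `α,β ≥ 2`
    (∀ α β : Fin (s₀ + 1), α ≠ 0 → β ≠ 0 →
      g (R13 (ξ α) (ξ 0 + x) (ξ 0 + x)) (ξ β) = 1) ∧
    -- `ḡ(R̄_u(ȳ),ξ̄_β) = 0` for `y ∈ V`, `β ≥ 2`
    (∀ (y : V) (β : Fin (s₀ + 1)), (∀ γ, η γ y = 0) → g x y = 0 → β ≠ 0 →
      g (R13 y (ξ 0 + x) (ξ 0 + x)) (ξ β) = 0) ∧
    -- `g(R_x(y),ξ_1) = 0` for `y ∈ V`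
    (∀ y : V, (∀ γ, η γ y = 0) → g x y = 0 → g (R13 y x x) (ξ 0) = 0) ∧
    -- `g(R_x(ξ_1),ξ_1) = 1`
    g (R13 (ξ 0) x x) (ξ 0) = 1 ∧
    -- `g(R_x(ξ_1),ξ_α) = −1` for `α ≥ 2`
    (∀ α : Fin (s₀ + 1), α ≠ 0 → g (R13 (ξ 0) x x) (ξ α) = -1) := by
  have hφxx : g (φ x) (φ x) = 1 := by
    rw [metric_phi_phi_of_eta_eq_zero hmetriccompat hx, hxx]
  refine ⟨fun y z hy hz _ _ => ?_, fun α β hα hβ => ?_, fun y β hy hxy _ => ?_,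
    fun y hy _ => jacobi_pairing_xi_of_eta_eq_zero hpair hanti1 hRIm hx hy 0, ?_,
    fun α hα => ?_⟩
  · have h0 : ∀ γ, η γ (0 : V) = 0 := fun γ => map_zero _
    rw [curv_add_add_pairing, (hRIm z y 0 hz hy h0 0 0).2, (hRIm z x y hz hx hy 0 0).1,
      hpair z (ξ 0) y x, (hRIm y x z hy hx hz 0 0).1, hε0, hgsymm z y]
    ring
  · rw [curv_add_add_pairing, hRξξ, hRξξ, hRξ, hRξ, hφξ, hφxx, hεpos α hα, hεpos β hβ]
    simp
  · rw [curv_add_add_pairing, curv_xi_pairing_xi hpair hanti1 hRξ,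
      curv_xi_pairing_xi hpair hanti1 hRξ,
      curv_eta_eq_zero_xi_pairing_xi hgsymm hmetriccompat hpair hanti1 hbianchi hRIm hRξ hx hy,
      jacobi_pairing_xi_of_eta_eq_zero hpair hanti1 hRIm hx hy, hφξ,
      metric_phi_phi_of_eta_eq_zero hmetriccompat hy, hgsymm y, hxy]
    simp
  · rw [hRξ, hφxx, hε0]
    norm_num
  · rw [hRξ, hφxx, hε0, hεpos α hα]
    norm_num

/-- On a Lorentzian `S`-manifold (timelike `ξ_1` indexed by `0`), for a unit
`x ∈ Im(φ)` and `u = ξ_1 + x ∈ N_φ(ξ_1)`, with `V = x^⊥ ∩ Im(φ)`: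
`ḡ(R̄_u(ȳ),z̄) = g(y,z) + g(R_x(y),z)` for `y,z ∈ V`;
`ḡ(R̄_u(ξ̄_α),ξ̄_β) = 1` and `ḡ(R̄_u(ȳ),ξ̄_β) = 0` for `α,β ≥ 2`, `y ∈ V`;
and `g(R_x(y),ξ_1) = 0`, `g(R_x(ξ_1),ξ_1) = 1`, `g(R_x(ξ_1),ξ_α) = −1` for `α ≥ 2`.
Here `R_x(y) = R(y,x)x = R13 y x x` with `R13 z w y = R(z,w)y` and the convention
`R(X,Y,Z,W) = g(R(Z,W)Y,X)`; the pairings of `R̄_u` with representatives compute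
`ḡ` on `ū^⊥`. -/
theorem null_jacobi_vs_spacelike_jacobi_computations
    {V : Type*} [AddCommGroup V] [Module ℝ V] [FiniteDimensional ℝ V]
    (g : V →ₗ[ℝ] V →ₗ[ℝ] ℝ) (hgsymm : ∀ x y, g x y = g y x)
    (hgL : IsLorentzian g)
    {s₀ : ℕ}
    (φ : V →ₗ[ℝ] V) (ξ : Fin (s₀ + 1) → V) (η : Fin (s₀ + 1) → V →ₗ[ℝ] ℝ)
    (ε : Fin (s₀ + 1) → ℝ)
    (hphi2 : ∀ x, φ (φ x) = -x + ∑ α, η α x • ξ α)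
    (hηξ : ∀ α β, η α (ξ β) = if α = β then 1 else 0)
    (hφξ : ∀ α, φ (ξ α) = 0) (hηφ : ∀ α x, η α (φ x) = 0)
    (hε0 : ε 0 = -1) (hεpos : ∀ α, α ≠ 0 → ε α = 1)
    (hgξξ : ∀ α β, g (ξ α) (ξ β) = if α = β then ε α else 0)
    (hgxi : ∀ α (x : V), g x (ξ α) = ε α * η α x)
    (hmetriccompat : ∀ x y, g (φ x) (φ y) = g x y - ∑ α, ε α * (η α x * η α y))
    (R13 : V →ₗ[ℝ] V →ₗ[ℝ] V →ₗ[ℝ] V)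
    -- curvature symmetries of `R(X,Y,Z,W) = g(R13 Z W Y, X)`
    (hpair : ∀ x y z w : V, g (R13 z w y) x = g (R13 x y w) z)
    (hanti1 : ∀ x y z w : V, g (R13 z w y) x = - g (R13 z w x) y)
    (hanti2 : ∀ x y z w : V, g (R13 z w y) x = - g (R13 w z y) x)
    (hbianchi : ∀ x y z w : V,
      g (R13 z w y) x + g (R13 x w z) y + g (R13 y w x) z = 0)
    -- curvature identities of the Lorentzian `S`-structure
    (hRIm : ∀ x y z : V, (∀ γ, η γ x = 0) → (∀ γ, η γ y = 0) → (∀ γ, η γ z = 0) →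
      ∀ α β,
        g (R13 z (ξ α) y) x = 0 ∧ g (R13 y (ξ β) (ξ α)) x = ε α * ε β * g x y)
    (hRξ : ∀ α β (y z : V),
      g (R13 (ξ α) z y) (ξ β) = ε β * ε α * g (φ y) (φ z))
    (hRξξ : ∀ α β γ (z : V), g (R13 (ξ α) z (ξ γ)) (ξ β) = 0)
    (x : V) (hx : ∀ γ, η γ x = 0) (hxx : g x x = 1) :
    -- `ḡ(R̄_u(ȳ),z̄) = g(y,z) + g(R_x(y),z)` for `y,z ∈ V = x^⊥ ∩ Im(φ)`
    (∀ y z : V, (∀ γ, η γ y = 0) → (∀ γ, η γ z = 0) → g x y = 0 → g x z = 0 →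
      g (R13 y (ξ 0 + x) (ξ 0 + x)) z = g y z + g (R13 y x x) z) ∧
    -- `ḡ(R̄_u(ξ̄_α),ξ̄_β) = 1` for `α,β ≥ 2`
    (∀ α β : Fin (s₀ + 1), α ≠ 0 → β ≠ 0 →
      g (R13 (ξ α) (ξ 0 + x) (ξ 0 + x)) (ξ β) = 1) ∧
    -- `ḡ(R̄_u(ȳ),ξ̄_β) = 0` for `y ∈ V`, `β ≥ 2`
    (∀ (y : V) (β : Fin (s₀ + 1)), (∀ γ, η γ y = 0) → g x y = 0 → β ≠ 0 →
      g (R13 y (ξ 0 + x) (ξ 0 + x)) (ξ β) = 0) ∧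
    -- `g(R_x(y),ξ_1) = 0` for `y ∈ V`
    (∀ y : V, (∀ γ, η γ y = 0) → g x y = 0 → g (R13 y x x) (ξ 0) = 0) ∧
    -- `g(R_x(ξ_1),ξ_1) = 1`
    g (R13 (ξ 0) x x) (ξ 0) = 1 ∧
    -- `g(R_x(ξ_1),ξ_α) = −1` for `α ≥ 2`
    (∀ α : Fin (s₀ + 1), α ≠ 0 → g (R13 (ξ 0) x x) (ξ α) = -1) :=
  null_jacobi_vs_spacelike_jacobi_computations_general g hgsymm φ ξ η ε hφξ hε0 hεpos hmetriccompat
    R13 hpair hanti1 hbianchi hRIm hRξ hRξξ x hx hxx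
end

section
/- Let A be a real symmetric (2n−1)×(2n−1) matrix, s ≥ 2, and let B be the (s−1)×(s−1) matrix all of whose entries equal 1. Define C as the block diagonal matrix diag(A, B), and D as the matrix with diagonal blocks A − I_{2n−1}, the 1×1 block (−1), and B, with off-diagonal couplings: the row of the 1×1 block has entries 1 against the B-block and 0 against the A-block, and the column of the 1×1 block has entries −1 against the B-block and 0 against the A-block. Then the characteristic polynomials satisfy p_C(λ) = p_A(λ)·(−1)^{s−1} λ^{s−2}(λ − s + 1) and p_D(λ) = p_A(λ+1)·(−1)^s λ^{s−1}(λ − (s−2)). In particular, the eigenvalues of C (with multiplicities) determine the eigenvalues of D (with multiplicities) and conversely. -/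
/-!
Both matrices are block diagonal with the `A`-block split off, and the remaining block is the
rank-one matrix `u vᵀ` (for `C`: `u = v = 1`; for `D`: `u = 1`, `v = (-1, 1, …, 1)`). A rank-one
matrix on `m` coordinates has characteristic polynomial `X^m - (u ⬝ᵥ v) X^(m-1)`, so only the
scalar `u ⬝ᵥ v`, namely `s - 1` resp. `s - 2`, enters.
-/

open Matrix Polynomial

namespace Matrix

variable {ι κ R : Type*}

section Ring

variable [Ring R]

theorem of_const_one_eq_vecMulVec :
    (of fun _ _ => 1 : Matrix ι κ R) = vecMulVec 1 1 := by
  ext; simp [vecMulVec]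

theorem fromBlocks_neg_one_eq_vecMulVec :
    fromBlocks (-1 : Matrix (Fin 1) (Fin 1) R) (of fun _ _ => 1) (of fun _ _ => -1)
      (of fun _ _ => 1 : Matrix κ κ R) = vecMulVec (Sum.elim 1 1) (Sum.elim (-1) 1) := by
  ext (i | i) (j | j) <;> simp [vecMulVec, Fin.fin_one_eq_zero]

end Ring

variable [Fintype ι] [Fintype κ] [DecidableEq ι] [DecidableEq κ] [CommRing R]

theorem det_sub_smul_one (M : Matrix ι ι R) (t : R) :
    (M - t • 1).det = (-1) ^ Fintype.card ι * M.charpoly.eval t := by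
  rw [eval_charpoly, ← det_neg, neg_sub, smul_one_eq_diagonal, scalar_apply]

theorem det_fromBlocks_zero₂₁_sub_smul_one (A : Matrix ι ι R) (B : Matrix ι κ R)
    (D : Matrix κ κ R) (t : R) :
    (fromBlocks A B 0 D - t • 1).det = (A - t • 1).det * (D - t • 1).det := by
  simp only [det_sub_smul_one, charpoly_fromBlocks_zero₂₁, eval_mul, Fintype.card_sum, pow_add]
  ring

theorem det_vecMulVec_sub_smul_one [Nonempty ι] (u v : ι → R) (t : R) :
    (vecMulVec u v - t • 1).det
      = (-1) ^ Fintype.card ι * t ^ (Fintype.card ι - 1) * (t - u ⬝ᵥ v) := by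
  obtain ⟨m, hm⟩ : ∃ m, Fintype.card ι = m + 1 := Nat.exists_eq_add_one.mpr Fintype.card_pos
  rw [det_sub_smul_one, charpoly_vecMulVec, hm, Nat.add_sub_cancel]
  simp only [eval_sub, eval_smul, eval_pow, eval_X, smul_eq_mul]
  ring

end Matrix

theorem charpoly_block_matrices_general
    (n s : ℕ) (hs : 2 ≤ s)
    (A : Matrix (Fin (2 * n - 1)) (Fin (2 * n - 1)) ℝ) :
    ∀ lam : ℝ,
      ((Matrix.fromBlocks A 0 0 (Matrix.of fun _ _ => (1 : ℝ)) :
          Matrix (Fin (2 * n - 1) ⊕ Fin (s - 1)) (Fin (2 * n - 1) ⊕ Fin (s - 1)) ℝ)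
          - lam • 1).det
        = (A - lam • 1).det * (-1) ^ (s - 1) * lam ^ (s - 2) * (lam - (s : ℝ) + 1) ∧
      ((Matrix.fromBlocks (A - 1) 0 0
          (Matrix.fromBlocks (-1 : Matrix (Fin 1) (Fin 1) ℝ)
            (Matrix.of fun _ _ => (1 : ℝ)) (Matrix.of fun _ _ => (-1 : ℝ))
            (Matrix.of fun _ _ => (1 : ℝ))) :
          Matrix (Fin (2 * n - 1) ⊕ (Fin 1 ⊕ Fin (s - 1)))
                 (Fin (2 * n - 1) ⊕ (Fin 1 ⊕ Fin (s - 1))) ℝ)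
          - lam • 1).det
        = (A - (lam + 1) • 1).det * (-1) ^ s * lam ^ (s - 1)
            * (lam - ((s : ℝ) - 2)) := by
  intro lam
  obtain ⟨k, rfl⟩ : ∃ k, s = k + 2 := ⟨s - 2, by omega⟩
  have : Nonempty (Fin (k + 2 - 1)) := ⟨⟨0, by omega⟩⟩
  have hshift : A - 1 - lam • 1 = A - (lam + 1) • 1 := by
    rw [add_smul, one_smul, sub_sub, add_comm]
  refine ⟨?_, ?_⟩
  · rw [det_fromBlocks_zero₂₁_sub_smul_one, of_const_one_eq_vecMulVec, det_vecMulVec_sub_smul_one]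
    simp only [Fintype.card_fin, Nat.add_one_sub_one, one_dotProduct_one]
    push_cast
    ring
  · rw [det_fromBlocks_zero₂₁_sub_smul_one, hshift, fromBlocks_neg_one_eq_vecMulVec,
      det_vecMulVec_sub_smul_one]
    simp only [Fintype.card_sum, Fintype.card_fin, Nat.add_one_sub_one, Nat.add_sub_cancel_left,
      sumElim_dotProduct_sumElim, dotProduct_neg, one_dotProduct_one]
    push_cast
    ring

/-- The linear-algebra core of the φ-null Osserman equivalence: for a symmetric
`(2n−1)×(2n−1)` real matrix `A`, `s ≥ 2`, `B` the all-ones `(s−1)×(s−1)` matrix,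
`C = diag(A,B)` and `D` the block matrix with diagonal blocks `A − I`, `(−1)`, `B`
and couplings `(0, 1,…,1)` in the row and `(0, −1,…,−1)ᵀ` in the column of the
`1×1` block, the characteristic polynomials `p_M(λ) = det(M − λI)` satisfy
`p_C(λ) = p_A(λ)·(−1)^{s−1} λ^{s−2}(λ−s+1)` and
`p_D(λ) = p_A(λ+1)·(−1)^s λ^{s−1}(λ−(s−2))`. -/
theorem charpoly_block_matrices
    (n s : ℕ) (hn : 1 ≤ n) (hs : 2 ≤ s)
    (A : Matrix (Fin (2 * n - 1)) (Fin (2 * n - 1)) ℝ) (hA : A.IsSymm) :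
    ∀ lam : ℝ,
      ((Matrix.fromBlocks A 0 0 (Matrix.of fun _ _ => (1 : ℝ)) :
          Matrix (Fin (2 * n - 1) ⊕ Fin (s - 1)) (Fin (2 * n - 1) ⊕ Fin (s - 1)) ℝ)
          - lam • 1).det
        = (A - lam • 1).det * (-1) ^ (s - 1) * lam ^ (s - 2) * (lam - (s : ℝ) + 1) ∧
      ((Matrix.fromBlocks (A - 1) 0 0
          (Matrix.fromBlocks (-1 : Matrix (Fin 1) (Fin 1) ℝ)
            (Matrix.of fun _ _ => (1 : ℝ)) (Matrix.of fun _ _ => (-1 : ℝ))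
            (Matrix.of fun _ _ => (1 : ℝ))) :
          Matrix (Fin (2 * n - 1) ⊕ (Fin 1 ⊕ Fin (s - 1)))
                 (Fin (2 * n - 1) ⊕ (Fin 1 ⊕ Fin (s - 1))) ℝ)
          - lam • 1).det
        = (A - (lam + 1) • 1).det * (-1) ^ s * lam ^ (s - 1)
            * (lam - ((s : ℝ) - 2)) :=
  charpoly_block_matrices_general n s hs A
end

section
/- Let (V, g, φ, ξ_α, η^α) be the tangent space at a point of a Lorentzian g.f.f-manifold, and let u = tx + ξ_1 + Σ_{α=2}^s k_α ξ_α with x ∈ Im(φ) unit, t ≠ 0, t² + Σ k_α² = 1. Then u is null, and g(φu, φu) = t². Moreover, for the tensors S(X,Y)Z = g(φX,φZ)φ²Y − g(φY,φZ)φ²X and T(X,Y)Z = g(φY,φZ)η̃(X)ξ̃ − g(φX,φZ)η̃(Y)ξ̃ − η̃(Y)η̃(Z)φ²X + η̃(X)η̃(Z)φ²Y, and for y = au + by' + Σ λ^i w_i ∈ u^⊥ (where y' ∈ Im(φ) ∩ x^⊥ is unit and the w_i span w_0^⊥ ∩ span(ξ_1,…,ξ_s) with w_0 = ξ_1 + Σ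 k_α ξ_α), one has g(S(u,y)u, y) = −b² g(φu,φu) g(y',y') and g(T(u,y)u, y) = −b² g(y',y') η̃(u)² − g(φu,φu)(a η̃(u) − η̃(y))². -/
/-- Pointwise computations on (the tangent space of) a Lorentzian `g.f.f`-manifold
with `s = s₀ + 2 ≥ 2` characteristic vector fields (the timelike `ξ_1` indexed by
`0`): for a lightlike vector of the first kind `u = t x + ξ_1 + ∑_{α≥2} k_α ξ_α`
(`x ∈ Im φ` unit, `t ≠ 0`, `t² + ∑ k_α² = 1`) one has `g(u,u) = 0` and
`g(φu,φu) = t²`; moreover, for `y = a u + b y' + ∑ λ^i w_i ∈ u^⊥` (with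
`y' ∈ Im(φ) ∩ x^⊥` unit and the `w_i` an orthonormal family of
`w_0^⊥ ∩ span(ξ_1,…,ξ_s)`, `w_0 = ξ_1 + ∑ k_α ξ_α`), the tensors
`S(X,Y)Z = g(φX,φZ)φ²Y − g(φY,φZ)φ²X` and
`T(X,Y)Z = g(φY,φZ)η̃(X)ξ̃ − g(φX,φZ)η̃(Y)ξ̃ − η̃(Y)η̃(Z)φ²X + η̃(X)η̃(Z)φ²Y`
satisfy `g(S(u,y)u,y) = −b² g(φu,φu) g(y',y')` and
`g(T(u,y)u,y) = −b² g(y',y') η̃(u)² − g(φu,φu)(a η̃(u) − η̃(y))²`. -/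
theorem first_kind_null_vector_S_T_computations
    {V : Type*} [AddCommGroup V] [Module ℝ V] [FiniteDimensional ℝ V]
    (g : V →ₗ[ℝ] V →ₗ[ℝ] ℝ) (hgsymm : ∀ x y, g x y = g y x)
    {s₀ : ℕ}
    (φ : V →ₗ[ℝ] V) (ξ : Fin (s₀ + 2) → V) (η : Fin (s₀ + 2) → V →ₗ[ℝ] ℝ)
    (ε : Fin (s₀ + 2) → ℝ)
    (hphi2 : ∀ x, φ (φ x) = -x + ∑ α, η α x • ξ α)
    (hηξ : ∀ α β, η α (ξ β) = if α = β then 1 else 0)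
    (hφξ : ∀ α, φ (ξ α) = 0) (hηφ : ∀ α x, η α (φ x) = 0)
    (hε0 : ε 0 = -1) (hεpos : ∀ α, α ≠ 0 → ε α = 1)
    (hgξξ : ∀ α β, g (ξ α) (ξ β) = if α = β then ε α else 0)
    (hgxi : ∀ α (x : V), g x (ξ α) = ε α * η α x)
    (hgφ : ∀ x y : V, g x (φ y) = - g (φ x) y)
    (hmetriccompat : ∀ x y, g (φ x) (φ y) = g x y - ∑ α, ε α * (η α x * η α y))
    -- the lightlike vector `u` of the first kind
    (x : V) (hx : ∀ γ, η γ x = 0) (hxx : g x x = 1)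
    (t : ℝ) (ht : t ≠ 0) (k : Fin (s₀ + 2) → ℝ) (hk0 : k 0 = 0)
    (hnorm : t ^ 2 + ∑ α, (k α) ^ 2 = 1)
    (u : V) (hu : u = t • x + ξ 0 + ∑ α, k α • ξ α)
    -- the vector `y = a u + b y' + ∑ λ^i w_i ∈ u^⊥`
    (a b : ℝ) (y' : V) (hy'Im : ∀ γ, η γ y' = 0) (hy'x : g x y' = 0)
    (hy' : g y' y' = 1)
    (w : Fin (s₀ + 1) → V)
    (hwspan : ∀ i, w i ∈ Submodule.span ℝ (Set.range ξ))
    (hww0 : ∀ i, g (w i) (ξ 0 + ∑ α, k α • ξ α) = 0)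
    (hworth : ∀ i j, g (w i) (w j) = if i = j then 1 else 0)
    (lam : Fin (s₀ + 1) → ℝ)
    (y : V) (hy : y = a • u + b • y' + ∑ i, lam i • w i) :
    -- `u` is null and `g(φu,φu) = t²`
    g u u = 0 ∧
    g (φ u) (φ u) = t ^ 2 ∧
    -- `g(S(u,y)u,y) = −b² g(φu,φu) g(y',y')`
    g (g (φ u) (φ u) • φ (φ y) - g (φ y) (φ u) • φ (φ u)) y
      = -(b ^ 2) * g (φ u) (φ u) * g y' y' ∧
    -- `g(T(u,y)u,y) = −b² g(y',y') η̃(u)² − g(φu,φu)(a η̃(u) − η̃(y))²`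
    g (((∑ β, ε β * η β u) * g (φ y) (φ u)) • (∑ α, ξ α)
        - ((∑ β, ε β * η β y) * g (φ u) (φ u)) • (∑ α, ξ α)
        - ((∑ β, ε β * η β y) * (∑ β, ε β * η β u)) • φ (φ u)
        + ((∑ β, ε β * η β u) * (∑ β, ε β * η β u)) • φ (φ y)) y
      = -(b ^ 2) * g y' y' * (∑ β, ε β * η β u) ^ 2
        - g (φ u) (φ u) * (a * (∑ β, ε β * η β u) - (∑ β, ε β * η β y)) ^ 2 := by

  -- auxiliary facts about vectors in the span of the ξ's
  have hφw : ∀ i, φ (w i) = 0 := by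
    intro i
    have h : Submodule.span ℝ (Set.range ξ) ≤ LinearMap.ker φ := by
      rw [Submodule.span_le]; rintro v ⟨α, rfl⟩; simpa using hφξ α
    exact h (hwspan i)
  have hker : ∀ (f : V →ₗ[ℝ] ℝ), (∀ α, f (ξ α) = 0) → ∀ i, f (w i) = 0 := by
    intro f hf i
    have h : Submodule.span ℝ (Set.range ξ) ≤ LinearMap.ker f := by
      rw [Submodule.span_le]; rintro v ⟨α, rfl⟩; simpa using hf α
    exact h (hwspan i)
  have hgxw : ∀ i, g x (w i) = 0 := hker (g x) (fun α => by rw [hgxi, hx, mul_zero])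
  have hgy'w : ∀ i, g y' (w i) = 0 := hker (g y') (fun α => by rw [hgxi, hy'Im, mul_zero])
  -- values of η on u
  have hηu : ∀ γ, η γ u = (if γ = 0 then 1 else 0) + k γ := by
    intro γ
    simp [hu, hx, hηξ, smul_eq_mul, mul_ite, Finset.sum_ite_eq]
  -- g x (ξ α) = 0 and g y' (ξ α) = 0
  have hgxξ : ∀ α, g x (ξ α) = 0 := fun α => by rw [hgxi, hx, mul_zero]
  have hgy'ξ : ∀ α, g y' (ξ α) = 0 := fun α => by rw [hgxi, hy'Im, mul_zero]
  -- g x u = t, g y' u = 0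
  have hgxu : g x u = t := by
    simp [hu, hgxξ, hxx]
  have hgy'u : g y' u = 0 := by
    have : g y' x = 0 := by rw [hgsymm]; exact hy'x
    simp [hu, hgy'ξ, this]
  -- u is null
  have hguu : g u u = 0 := by
    have h1 : g (ξ 0) u = -1 := by
      have h2 : g (ξ 0) x = 0 := by rw [hgsymm]; exact hgxξ 0
      have h3 : ∀ α, g (ξ 0) (ξ α) = if (0 : Fin (s₀+2)) = α then ε 0 else 0 := hgξξ 0
      simp [hu, h2, h3, smul_eq_mul, mul_ite, Finset.sum_ite_eq, hk0, hε0]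
    have h4 : ∀ α, g (ξ α) u = (if α = 0 then -1 else 0) + ε α * k α := by
      intro α
      have h2 : g (ξ α) x = 0 := by rw [hgsymm]; exact hgxξ α
      have h3 : ∀ β, g (ξ α) (ξ β) = if α = β then ε α else 0 := hgξξ α
      by_cases hα : α = 0
      · subst hα; simpa [hε0, hk0] using h1
      · simp [hu, h2, h3, smul_eq_mul, mul_ite, Finset.sum_ite_eq, hα,
          hεpos α hα, mul_comm]
    have hsum : ∑ α, k α * g (ξ α) u = ∑ α, k α ^ 2 := by
      refine Finset.sum_congr rfl fun α _ => ?_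
      by_cases hα : α = 0
      · subst hα; simp [hk0]
      · rw [h4]; simp [hα, hεpos α hα]; ring
    calc g u u = t * g x u + g (ξ 0) u + ∑ α, k α * g (ξ α) u := by
          simp [hu, smul_eq_mul]
      _ = t * t + (-1) + ∑ α, k α ^ 2 := by rw [hgxu, h1, hsum]
      _ = 0 := by nlinarith [hnorm]
  -- φu and φ²u
  have hφu : φ u = t • φ x := by
    simp [hu, hφξ]
  have hφφu : φ (φ u) = -(t • x) := by
    rw [hφu, map_smul, hphi2]
    simp [hx]
  -- g(φu,φu) = t²
  have hsumεη : ∑ α, ε α * (η α u * η α u) = -1 + ∑ α, k α ^ 2 := by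
    have h0 : ε 0 * (η 0 u * η 0 u) = -1 := by
      rw [hηu]; simp [hε0, hk0]
    rw [Fin.sum_univ_succ, Fin.sum_univ_succ (f := fun α => k α ^ 2), h0, hk0]
    have : ∀ i : Fin (s₀ + 1), ε i.succ * (η i.succ u * η i.succ u) = k i.succ ^ 2 := by
      intro i
      rw [hηu, hεpos _ (Fin.succ_ne_zero i)]
      simp [Fin.succ_ne_zero i]; ring
    rw [Finset.sum_congr rfl fun i _ => this i]
    ring
  have hφuφu : g (φ u) (φ u) = t ^ 2 := by
    rw [hmetriccompat, hguu, hsumεη]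
    nlinarith [hnorm]
  -- φy and φ²y
  have hφy : φ y = a • φ u + b • φ y' := by
    simp [hy, hφw]
  have hφφy' : φ (φ y') = -y' := by
    rw [hphi2]; simp [hy'Im]
  have hφφy : φ (φ y) = a • -(t • x) + b • -y' := by
    rw [hφy, map_add, map_smul, map_smul, hφφu, hφφy']
  -- g(φy', φu) = 0
  have hφy'φu : g (φ y') (φ u) = 0 := by
    rw [hmetriccompat, hgy'u]
    simp [hy'Im]
  -- g(φy, φu) = a t²
  have hφyφu : g (φ y) (φ u) = a * t ^ 2 := by
    rw [hφy]
    simp only [map_add, map_smul, LinearMap.add_apply, LinearMap.smul_apply,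
      smul_eq_mul, hφuφu, hφy'φu]
    ring
  -- g x y = a t, g y' y = b
  have hgxy : g x y = a * t := by
    simp [hy, hgxu, hy'x, hgxw, smul_eq_mul]
  have hgy'y : g y' y = b := by
    simp [hy, hgy'u, hy', hgy'w, smul_eq_mul]
  -- g (∑ ξα) y = ∑ εα ηα y
  have hgxisumy : g (∑ α, ξ α) y = ∑ β, ε β * η β y := by
    rw [map_sum, LinearMap.sum_apply]
    refine Finset.sum_congr rfl fun α _ => ?_
    rw [hgsymm, hgxi]
  -- g(φ²u, y) and g(φ²y, y)
  have hφφuy : g (φ (φ u)) y = -(a * t ^ 2) := by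
    rw [hφφu]
    simp only [map_neg, map_smul, LinearMap.neg_apply, LinearMap.smul_apply,
      smul_eq_mul, hgxy]
    ring
  have hφφyy : g (φ (φ y)) y = -(a ^ 2 * t ^ 2) - b ^ 2 := by
    rw [hφφy]
    simp only [map_add, map_neg, map_smul, LinearMap.add_apply, LinearMap.neg_apply,
      LinearMap.smul_apply, smul_eq_mul, hgxy, hgy'y]
    ring
  refine ⟨hguu, hφuφu, ?_, ?_⟩
  · rw [map_sub, map_smul, map_smul, LinearMap.sub_apply, LinearMap.smul_apply,
      LinearMap.smul_apply, smul_eq_mul, smul_eq_mul, hφuφu, hφyφu, hφφuy, hφφyy, hy']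
    ring
  · rw [map_add, map_sub, map_sub, map_smul, map_smul, map_smul, map_smul]
    simp only [LinearMap.add_apply, LinearMap.sub_apply, LinearMap.smul_apply, smul_eq_mul]
    rw [hφuφu, hφyφu, hφφuy, hφφyy, hgxisumy, hy']
    ring
end
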